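/- arXiv:1206.4504 — 2 statements merged into one kernel-verified Lean document; each statement's English description precedes it below -/
import Mathlib

section
/- For every timed I/O transition system P, the determinisation P^D is a deterministic TIOTS and P is substitutively equivalent to P^D (P ≃ P^D); hence every TIOTS is substitutively equivalent to a deterministic TIOTS. -/
open Classical

namespace TSpec

/-- Positive real time delays. -/
abbrev Delay : Type := {d : ℝ // 0 < d}

/-- Sum of two positive delays. -/
def dsum (d e : Delay) : Delay := ⟨d.1 + e.1, add_pos d.2 e.2⟩

/-- Timed actions over an action alphabet `Act`: visible actions or positive delays. -/
inductive TAct (Act : Type) : Type where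
  | act : Act → TAct Act
  | delay : Delay → TAct Act

/-- A timed action is a delay. -/
def TAct.isDelay {Act : Type} : TAct Act → Prop
  | .act _ => False
  | .delay _ => True

/-- A timed action is valid for a set `A` of visible actions:
visible actions must belong to `A`, delays are always valid.
(For `A = O` this expresses membership in the timed outputs `tO = O ⊎ ℝ>0`,
for `A = I ∪ O` membership in the timed alphabet `tA`.) -/
def TAct.valid {Act : Type} (A : Set Act) : TAct Act → Prop
  | .act a => a ∈ A
  | .delay _ => True

/-- Timed words: finite sequences of timed actions. -/
abbrev TWord (Act : Type) := List (TAct Act)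

/-- Well-formed timed word: no two adjacent delays (reals). -/
def IsTWord {Act : Type} (w : TWord Act) : Prop :=
  List.Chain' (fun x y => ¬ (TAct.isDelay x ∧ TAct.isDelay y)) w

/-- Well-formed timed word over the alphabet `A`. -/
def ValidW {Act : Type} (A : Set Act) (w : TWord Act) : Prop :=
  IsTWord w ∧ ∀ α ∈ w, TAct.valid A α

/-- Concatenation of timed words, coalescing (summing) adjacent delays. -/
def tcat {Act : Type} (w w' : TWord Act) : TWord Act :=
  match w.getLast?, w' with
  | some (TAct.delay d), TAct.delay e :: rest => w.dropLast ++ TAct.delay (dsum d e) :: rest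
  | _, _ => w ++ w'

/-- `Pref w₀ w`: `w₀` is a prefix of `w` (w.r.t. coalescing concatenation). -/
def Pref {Act : Type} (w₀ w : TWord Act) : Prop := ∃ w₁, tcat w₀ w₁ = w

/-- Strict prefix. -/
def SPref {Act : Type} (w₀ w : TWord Act) : Prop := Pref w₀ w ∧ w₀ ≠ w

/-- `X · tA*`: all extensions of words in `X` by timed words over the alphabet `A`. -/
def Ext {Act : Type} (A : Set Act) (X : Set (TWord Act)) : Set (TWord Act) :=
  {w | ∃ w₀ ∈ X, ∃ w₁, ValidW A w₁ ∧ w = tcat w₀ w₁}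

/-- `X · ℝ≥0`: all extensions of words in `X` by a (possibly zero) delay. -/
def ExtDelay {Act : Type} (X : Set (TWord Act)) : Set (TWord Act) :=
  X ∪ {w | ∃ w₀ ∈ X, ∃ d : Delay, w = tcat w₀ [TAct.delay d]}

/-- `w` is a time-extension of `w₀`: equal, or extended by a single delay. -/
def TimeExt {Act : Type} (w₀ w : TWord Act) : Prop :=
  w = w₀ ∨ ∃ d : Delay, w = tcat w₀ [TAct.delay d]

/-- States of a TIOTS: plain states together with the inconsistent state `⊥`
and the timestop state `⊤`. -/
inductive St (σ : Type) : Type where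
  | plain : σ → St σ
  | bot : St σ
  | top : St σ

/-- Map a function on plain states over `St`, preserving `⊥` and `⊤`. -/
def St.map {σ τ : Type} (f : σ → τ) : St σ → St τ
  | .plain p => .plain (f p)
  | .bot => .bot
  | .top => .top

/-- Interchange `⊤` and `⊥`. -/
def St.swap {σ : Type} : St σ → St σ
  | .plain p => .plain p
  | .bot => .top
  | .top => .bot

/-- Timed I/O transition system over action alphabet `Act`:
inputs `I`, outputs `O`, plain-state type `Sig`, initial state, and a
transition relation labelled by timed actions. -/
structure TIOTS (Act : Type) : Type 1 where
  Sig : Type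
  I : Set Act
  O : Set Act
  init : St Sig
  tr : St Sig → TAct Act → St Sig → Prop

/-- Full (visible) alphabet of a TIOTS. -/
def TIOTS.A {Act : Type} (P : TIOTS Act) : Set Act := P.I ∪ P.O

/-- Well-formedness: disjoint inputs/outputs, alphabet-respecting transitions,
`⊤` quiescent (exactly the delay self-loops), `⊥` chaotic (exactly the
self-loops for each timed action of the alphabet), and time additivity. -/
def WF {Act : Type} (P : TIOTS Act) : Prop :=
  Disjoint P.I P.O ∧
  (∀ s α s', P.tr s α s' → TAct.valid P.A α) ∧
  (∀ α (s' : St P.Sig), P.tr .top α s' ↔ (TAct.isDelay α ∧ s' = .top)) ∧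
  (∀ α (s' : St P.Sig), P.tr .bot α s' ↔ (TAct.valid P.A α ∧ s' = .bot)) ∧
  (∀ (p : P.Sig) (d e : Delay) (s' : St P.Sig),
      P.tr (.plain p) (.delay (dsum d e)) s' ↔
        ∃ s, P.tr (.plain p) (.delay d) s ∧ P.tr s (.delay e) s')

/-- Determinism: no ambiguous transitions. -/
def Deterministic {Act : Type} (P : TIOTS Act) : Prop :=
  ∀ s α s' s'', P.tr s α s' → P.tr s α s'' → s' = s''

/-- `α` is enabled at state `s`. -/
def enabled {Act : Type} (P : TIOTS Act) (s : St P.Sig) (α : TAct Act) : Prop :=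
  ∃ s', P.tr s α s'

/-- `⊥`-completion: add `p →a ⊥` for every plain state `p` and input `a` not enabled at `p`. -/
def botComplete {Act : Type} (P : TIOTS Act) : TIOTS Act :=
  { P with
    tr := fun s α s' =>
      P.tr s α s' ∨
        ((∃ p, s = St.plain p) ∧ (∃ a ∈ P.I, α = TAct.act a) ∧ ¬ enabled P s α ∧ s' = .bot) }

/-- `⊤`-completion: add `p →α ⊤` for every plain state `p` and timed output `α ∈ tO`
not enabled at `p`. -/
def topComplete {Act : Type} (P : TIOTS Act) : TIOTS Act :=
  { P with
    tr := fun s α s' =>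
      P.tr s α s' ∨
        ((∃ p, s = St.plain p) ∧ TAct.valid P.O α ∧ ¬ enabled P s α ∧ s' = .top) }

/-- `(P^⊥)^⊤`. -/
def TIOTS.complete {Act : Type} (P : TIOTS Act) : TIOTS Act := topComplete (botComplete P)

/-- Finite executions: `Exec P s w s'` holds when there is a finite execution from
`s` to `s'` whose trace (labels with adjacent delays coalesced) is `w`. -/
inductive Exec {Act : Type} (P : TIOTS Act) : St P.Sig → TWord Act → St P.Sig → Prop where
  | nil (s : St P.Sig) : Exec P s [] s
  | cons {s : St P.Sig} {α : TAct Act} {s' : St P.Sig} {w : TWord Act} {s'' : St P.Sig} :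
      P.tr s α s' → Exec P s' w s'' → Exec P s (tcat [α] w) s''

/-- `s` is reachable from the initial state via trace `w`. -/
def Reach {Act : Type} (P : TIOTS Act) (w : TWord Act) (s : St P.Sig) : Prop :=
  Exec P P.init w s

/-- `⊥`-freeness: `⊥` is not reachable from the initial state. -/
def BotFree {Act : Type} (P : TIOTS Act) : Prop := ∀ w, ¬ Reach P w .bot

/-- Error traces of `P`: traces of `(P^⊥)^⊤` leading to `⊥`. -/
def TEset {Act : Type} (P : TIOTS Act) : Set (TWord Act) := {w | Reach P.complete w .bot}

/-- Magic traces of `P`: traces of `(P^⊥)^⊤` leading to `⊤`. -/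
def TMset {Act : Type} (P : TIOTS Act) : Set (TWord Act) := {w | Reach P.complete w .top}

/-- Plain traces of `P`: traces of `(P^⊥)^⊤` leading to a plain state. -/
def TPset {Act : Type} (P : TIOTS Act) : Set (TWord Act) :=
  {w | ∃ p, Reach P.complete w (St.plain p)}

/-- Realisable traces: `TR = TE ∪ TP`. -/
def TRset {Act : Type} (P : TIOTS Act) : Set (TWord Act) := TEset P ∪ TPset P

/-- All traces: `TT = TE ∪ TP ∪ TM`. -/
def TTset {Act : Type} (P : TIOTS Act) : Set (TWord Act) := TEset P ∪ TPset P ∪ TMset P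

/-- Composite plain-state space for binary operators: lone left states, lone right
states, and product states. -/
def CState (σ₀ σ₁ : Type) : Type := σ₀ ⊕ σ₁ ⊕ σ₀ × σ₁

def pairSt {σ₀ σ₁ : Type} (p : σ₀) (q : σ₁) : CState σ₀ σ₁ := Sum.inr (Sum.inr (p, q))

def embL {σ₀ σ₁ : Type} : St σ₀ → St (CState σ₀ σ₁) := St.map (fun p => Sum.inl p)

def embR {σ₀ σ₁ : Type} : St σ₁ → St (CState σ₀ σ₁) := St.map (fun q => Sum.inr (Sum.inl q))

/-- State table for parallel composition: `⊤` if either is `⊤`, otherwise `⊥`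
if either is `⊥`, otherwise the pair. -/
def stPar {σ₀ σ₁ : Type} : St σ₀ → St σ₁ → St (CState σ₀ σ₁)
  | .top, _ => .top
  | _, .top => .top
  | .bot, _ => .bot
  | _, .bot => .bot
  | .plain p, .plain q => .plain (pairSt p q)

/-- State table for conjunction: `⊤` if either is `⊤`, otherwise the other
operand if either is `⊥`, otherwise the pair. -/
def stAnd {σ₀ σ₁ : Type} : St σ₀ → St σ₁ → St (CState σ₀ σ₁)
  | .top, _ => .top
  | _, .top => .top
  | .bot, .bot => .bot
  | .bot, .plain q => .plain (Sum.inr (Sum.inl q))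
  | .plain p, .bot => .plain (Sum.inl p)
  | .plain p, .plain q => .plain (pairSt p q)

/-- State table for disjunction: `⊥` if either is `⊥`, otherwise the other
operand if either is `⊤`, otherwise the pair. -/
def stOr {σ₀ σ₁ : Type} : St σ₀ → St σ₁ → St (CState σ₀ σ₁)
  | .bot, _ => .bot
  | _, .bot => .bot
  | .top, .top => .top
  | .top, .plain q => .plain (Sum.inr (Sum.inl q))
  | .plain p, .top => .plain (Sum.inl p)
  | .plain p, .plain q => .plain (pairSt p q)

/-- State table for quotient `s₀ % s₁`: `⊥` if `s₁ = ⊤`, or if `s₀ = ⊥` and `s₁ ≠ ⊤`;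
`⊤` if `s₁ = ⊥` and `s₀ ≠ ⊥`, or if `s₀ = ⊤` and `s₁` plain; the pair if both plain. -/
def stQuo {σ₀ σ₁ : Type} : St σ₀ → St σ₁ → St (CState σ₀ σ₁)
  | _, .top => .bot
  | .bot, _ => .bot
  | _, .bot => .top
  | .top, .plain _ => .top
  | .plain p, .plain q => .plain (pairSt p q)

/-- Synchronised product of two (already `⊥`- and `⊤`-completed) TIOTSs, with the
given state-combination table and alphabets. The transition relation contains the
embedded component transitions (on lone states); from product states, shared
actions and all delays synchronise while independent visible actions interleave;
`⊥` is chaotic and `⊤` quiescent. -/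
def rawProd {Act : Type} (P Q : TIOTS Act)
    (comb : St P.Sig → St Q.Sig → St (CState P.Sig Q.Sig)) (I O : Set Act) : TIOTS Act where
  Sig := CState P.Sig Q.Sig
  I := I
  O := O
  init := comb P.init Q.init
  tr := fun s α s' =>
    (∃ p s₀, s = St.plain (Sum.inl p) ∧ P.tr (.plain p) α s₀ ∧ s' = embL s₀) ∨
    (∃ q s₁, s = St.plain (Sum.inr (Sum.inl q)) ∧ Q.tr (.plain q) α s₁ ∧ s' = embR s₁) ∨
    (∃ p q, s = St.plain (pairSt p q) ∧
      ((TAct.valid (P.A ∩ Q.A) α ∧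
          ∃ (s₀ : St P.Sig) (s₁ : St Q.Sig),
            P.tr (.plain p) α s₀ ∧ Q.tr (.plain q) α s₁ ∧ s' = comb s₀ s₁) ∨
       (∃ a, α = TAct.act a ∧ a ∈ P.A \ Q.A ∧
          ∃ s₀ : St P.Sig, P.tr (.plain p) α s₀ ∧ s' = comb s₀ (.plain q)) ∨
       (∃ a, α = TAct.act a ∧ a ∈ Q.A \ P.A ∧
          ∃ s₁ : St Q.Sig, Q.tr (.plain q) α s₁ ∧ s' = comb (.plain p) s₁))) ∨
    (s = .bot ∧ TAct.valid (I ∪ O) α ∧ s' = .bot) ∨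
    (s = .top ∧ TAct.isDelay α ∧ s' = .top)

/-- Parallel composition `P ∥ Q` (requires `∥`-composability: disjoint output sets). -/
def parC {Act : Type} (P Q : TIOTS Act) : TIOTS Act :=
  rawProd P.complete Q.complete stPar ((P.I ∪ Q.I) \ (P.O ∪ Q.O)) (P.O ∪ Q.O)

/-- Conjunction `P ∧ Q` (requires identical alphabets). -/
def andC {Act : Type} (P Q : TIOTS Act) : TIOTS Act :=
  rawProd P.complete Q.complete stAnd P.I P.O

/-- Disjunction `P ∨ Q` (requires identical alphabets). -/
def orC {Act : Type} (P Q : TIOTS Act) : TIOTS Act :=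
  rawProd P.complete Q.complete stOr P.I P.O

/-- Reduction of a subset of states in the subset construction: a subset containing
`⊥` becomes `⊥`; `⊤` is removed from any subset other than `{⊤}`. -/
noncomputable def detSt {σ : Type} (X : Set (St σ)) : St (Set σ) :=
  if St.bot ∈ X then .bot
  else if X = {St.top} then .top
  else .plain {p | St.plain p ∈ X}

/-- Successor subset. -/
def post {Act : Type} (P : TIOTS Act) (X : Set P.Sig) (α : TAct Act) : Set (St P.Sig) :=
  {s' | ∃ p ∈ X, P.tr (.plain p) α s'}

/-- Determinisation `P^D` by subset construction on `(P^⊥)^⊤`. -/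
noncomputable def TIOTS.det {Act : Type} (P : TIOTS Act) : TIOTS Act where
  Sig := Set P.Sig
  I := P.I
  O := P.O
  init := detSt {P.complete.init}
  tr := fun s α s' =>
    (∃ X, s = St.plain X ∧ TAct.valid P.A α ∧ s' = detSt (post P.complete X α)) ∨
    (s = .bot ∧ TAct.valid P.A α ∧ s' = .bot) ∨
    (s = .top ∧ TAct.isDelay α ∧ s' = .top)

/-- Mirror `P¬`: determinise, then interchange inputs with outputs and `⊤` with `⊥`. -/
noncomputable def TIOTS.mirror {Act : Type} (P : TIOTS Act) : TIOTS Act where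
  Sig := (P.det).Sig
  I := P.O
  O := P.I
  init := St.swap (P.det).init
  tr := fun s α s' => (P.det).tr (St.swap s) α (St.swap s')

/-- Alphabet domination: `A_Q ⊆ A_P` and `O_Q ⊆ O_P`. -/
def Dominates {Act : Type} (P Q : TIOTS Act) : Prop := Q.A ⊆ P.A ∧ Q.O ⊆ P.O

/-- Quotient `P % Q` (requires that `P` dominates `Q`); `Q` is determinised first. -/
noncomputable def quoC {Act : Type} (P Q : TIOTS Act) : TIOTS Act :=
  rawProd P.complete (Q.det).complete stQuo (P.I ∪ Q.O) (P.O \ Q.O)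

/-- `Q` is an environment for `P`: complementary alphabets. -/
def Env {Act : Type} (P Q : TIOTS Act) : Prop := Q.I = P.O ∧ Q.O = P.I

/-- Substitutive refinement: `Refines P Q` means `P ⊑ Q`, i.e. the alphabets agree and
for every environment `R`, `⊥`-freeness of `P ∥ R` implies `⊥`-freeness of `Q ∥ R`. -/
def Refines {Act : Type} (P Q : TIOTS Act) : Prop :=
  P.I = Q.I ∧ P.O = Q.O ∧
  ∀ R : TIOTS Act, WF R → Env P R → BotFree (parC P R) → BotFree (parC Q R)

/-- Substitutive equivalence `P ≃ Q`. -/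
def SEquiv {Act : Type} (P Q : TIOTS Act) : Prop := Refines P Q ∧ Refines Q P

/-- Enabled timed actions at a plain state. -/
def eb {Act : Type} (G : TIOTS Act) (p : G.Sig) : Set (TAct Act) :=
  {α | enabled G (.plain p) α}

/-- The component move(s) proposed at a plain state: enabled outputs and delays. -/
def mvSet {Act : Type} (G : TIOTS Act) (p : G.Sig) : Set (TAct Act) :=
  {α | enabled G (.plain p) α ∧ TAct.valid G.O α}

/-- One-step relation between plain states. -/
def plainStep {Act : Type} (G : TIOTS Act) (p p' : G.Sig) : Prop :=
  ∃ α, G.tr (.plain p) α (.plain p')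

/-- Tree TIOTS: acyclic (on plain states), no state is the target of both an action-
and a delay-transition, action transitions into the same state coincide, and delay
transitions into the same state have the same source. -/
def IsTree {Act : Type} (G : TIOTS Act) : Prop :=
  (∀ p, ¬ Relation.TransGen (plainStep G) p p) ∧
  (∀ p p' p'' a d, G.tr (.plain p) (TAct.act a) (.plain p'') →
      G.tr (.plain p') (TAct.delay d) (.plain p'') → False) ∧
  (∀ p p' p'' a b, G.tr (.plain p) (TAct.act a) (.plain p'') →
      G.tr (.plain p') (TAct.act b) (.plain p'') → p = p' ∧ a = b) ∧
  (∀ p p' p'' d, G.tr (.plain p) (TAct.delay d) (.plain p'') →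
      G.tr (.plain p') (TAct.delay d) (.plain p'') → p = p')

/-- Strategy: a deterministic tree TIOTS in which every plain state enables exactly
the inputs together with a unique component move, the move being a single output or
a nonempty set of delays. -/
def IsStrategy {Act : Type} (G : TIOTS Act) : Prop :=
  WF G ∧ Deterministic G ∧ IsTree G ∧
  ∀ p : G.Sig,
    eb G p = {α | ∃ a ∈ G.I, α = TAct.act a} ∪ mvSet G p ∧
    ((∃ a ∈ G.O, mvSet G p = {TAct.act a}) ∨
      ((mvSet G p).Nonempty ∧ ∀ α ∈ mvSet G p, TAct.isDelay α))

/-- `G` is a partial unfolding of `Q`: a state map preserving `⊥`, `⊤`, plainness,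
the initial state and the transitions. -/
def PartialUnfolding {Act : Type} (G Q : TIOTS Act) : Prop :=
  G.I = Q.I ∧ G.O = Q.O ∧
  ∃ f : G.Sig → Q.Sig,
    St.map f G.init = Q.init ∧
    ∀ (p : G.Sig) (α : TAct Act) (s' : St G.Sig),
      G.tr (.plain p) α s' → Q.tr (.plain (f p)) α (St.map f s')

/-- Strategies contained in `P`: partial unfoldings of `(P^⊥)^⊤`. -/
def stg {Act : Type} (P : TIOTS Act) : Set (TIOTS Act) :=
  {G | IsStrategy G ∧ PartialUnfolding G P.complete}

/-- Affinity: identical alphabets and equal proposed moves after equal traces. -/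
def Affine {Act : Type} (G G' : TIOTS Act) : Prop :=
  G.I = G'.I ∧ G.O = G'.O ∧
  ∀ (w : TWord Act) (p : G.Sig) (p' : G'.Sig),
    Reach G w (.plain p) → Reach G' w (.plain p') → mvSet G p = mvSet G' p'

/-- Aggressiveness order `G ≼ G'` on affine strategies: `G` reaches `⊥` faster and
`⊤` slower than `G'`. -/
def Agg {Act : Type} (G G' : TIOTS Act) : Prop :=
  Affine G G' ∧
  (∀ w, Reach G' w .bot → ∃ w₀, Pref w₀ w ∧ Reach G w₀ .bot) ∧
  (∀ w, Reach G w .top → ∃ w₀, Pref w₀ w ∧ Reach G' w₀ .top)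

/-- Strategy semantics `[P]_s`: upward closure of `stg(P)` w.r.t. `≼`. -/
def ssem {Act : Type} (P : TIOTS Act) : Set (TIOTS Act) :=
  {G' | IsStrategy G' ∧ ∃ G ∈ stg P, Agg G G'}

/-- Strategy disjunction `G + G'` of (affine) strategies: their synchronised
`∨`-product, without further completion. -/
def stratPlus {Act : Type} (G G' : TIOTS Act) : TIOTS Act := rawProd G G' stOr G.I G.O

/-- Isomorphism of TIOTSs. -/
def TIso {Act : Type} (P Q : TIOTS Act) : Prop :=
  P.I = Q.I ∧ P.O = Q.O ∧
  ∃ e : P.Sig ≃ Q.Sig,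
    St.map (fun x => e x) P.init = Q.init ∧
    ∀ s α s', P.tr s α s' ↔ Q.tr (St.map (fun x => e x) s) α (St.map (fun x => e x) s')

/-- Disjunction closure of a set of strategies (strategies are identified up to
isomorphism): least superset closed under `+` of affine pairs. -/
inductive DClos {Act : Type} (S : Set (TIOTS Act)) : TIOTS Act → Prop where
  | base {G} : G ∈ S → DClos S G
  | disj {G G'} : DClos S G → DClos S G' → Affine G G' → DClos S (stratPlus G G')
  | iso {G G'} : DClos S G → TIso G G' → DClos S G'

/-- Disjunction closure `Π⁺` as a set. -/
def dclos {Act : Type} (S : Set (TIOTS Act)) : Set (TIOTS Act) := {G | DClos S G}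

/-- `[P]_s⁺`. -/
def sClos {Act : Type} (P : TIOTS Act) : Set (TIOTS Act) := dclos (ssem P)

/-- Coin strategies: functions from histories to `{0,1}`. -/
abbrev Coin (Act : Type) := TWord Act → Bool

/-- The strategy proposes output `a` at `p`. -/
def proposesA {Act : Type} (G : TIOTS Act) (p : G.Sig) (a : Act) : Prop :=
  TAct.act a ∈ mvSet G p

/-- The strategy proposes delay `d` at `p`. -/
def proposesD {Act : Type} (G : TIOTS Act) (p : G.Sig) (d : Delay) : Prop :=
  TAct.delay d ∈ mvSet G p

/-- Game-state combination for plays (game states carry the history). -/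
def stPlay {Act : Type} {σ₀ σ₁ : Type} (w : TWord Act) :
    St σ₀ → St σ₁ → St (σ₀ × σ₁ × TWord Act)
  | .top, _ => .top
  | _, .top => .top
  | .bot, _ => .bot
  | _, .bot => .bot
  | .plain p, .plain q => .plain (p, q, w)

/-- A component fires `α` if `α` is in its timed alphabet, and stays put otherwise. -/
def stepOrStay {Act : Type} (G : TIOTS Act) (p : G.Sig) (α : TAct Act) (s : St G.Sig) : Prop :=
  (TAct.valid G.A α ∧ G.tr (.plain p) α s) ∨ (¬ TAct.valid G.A α ∧ s = .plain p)

/-- Inputs that fire autonomously at a game state: synchronised inputs and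
independent inputs. -/
def firedInput {Act : Type} (GP GQ : TIOTS Act) (a : Act) : Prop :=
  a ∈ GP.I ∩ GQ.I ∨ (a ∈ GP.I ∪ GQ.I ∧ a ∉ GP.A ∩ GQ.A)

/-- The timed action `α` fires at game state `(p, q)` with history `w`: it is a fired
input, or a prevailing component move (an action prevails over a delay, the common
delays prevail when both propose delays, and the coin `h` resolves ties between two
proposed actions: `false` lets the left strategy win). -/
def fired {Act : Type} (GP GQ : TIOTS Act) (h : Coin Act) (p : GP.Sig) (q : GQ.Sig)
    (w : TWord Act) : TAct Act → Prop
  | TAct.act a =>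
      firedInput GP GQ a ∨
      (proposesA GP p a ∧ ((∃ b, proposesA GQ q b) → h w = false)) ∨
      (proposesA GQ q a ∧ ((∃ b, proposesA GP p b) → h w = true))
  | TAct.delay d => proposesD GP p d ∧ proposesD GQ q d

/-- The play `G_P ∥_h G_Q` of two strategies with composable alphabets against a
coin strategy `h`: a tree TIOTS over game states carrying histories. -/
def play {Act : Type} (GP GQ : TIOTS Act) (h : Coin Act) : TIOTS Act where
  Sig := GP.Sig × GQ.Sig × TWord Act
  I := (GP.I ∪ GQ.I) \ (GP.O ∪ GQ.O)
  O := GP.O ∪ GQ.O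
  init := stPlay [] GP.init GQ.init
  tr := fun s α s' =>
    (∃ p q w, s = St.plain (p, q, w) ∧ fired GP GQ h p q w α ∧
      ∃ (s₀ : St GP.Sig) (s₁ : St GQ.Sig),
        stepOrStay GP p α s₀ ∧ stepOrStay GQ q α s₁ ∧
        s' = stPlay (tcat w [α]) s₀ s₁) ∨
    (s = .bot ∧ TAct.valid (GP.A ∪ GQ.A) α ∧ s' = .bot) ∨
    (s = .top ∧ TAct.isDelay α ∧ s' = .top)

/-- Projection of a timed word onto a sub-alphabet: delete visible actions outside
the sub-alphabet and coalesce adjacent delays. -/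
noncomputable def projW {Act : Type} (A : Set Act) (w : TWord Act) : TWord Act :=
  w.foldr (fun α acc =>
    match α with
    | TAct.act a => if a ∈ A then tcat [TAct.act a] acc else acc
    | TAct.delay d => tcat [TAct.delay d] acc) []


/-! ### Auxiliary lemmas for the determinisation theorem -/

section DetAux

variable {Act : Type}

lemma exec_snoc {M : TIOTS Act} :
    ∀ {s t : St M.Sig} {w : TWord Act}, Exec M s w t →
      ∀ {α : TAct Act} {u : St M.Sig}, M.tr t α u → ∃ w', Exec M s w' u := by
  intro s t w h
  induction h with
  | nil s => intro α u h2; exact ⟨_, Exec.cons h2 (Exec.nil _)⟩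
  | cons htr hex ih =>
      intro α u h2
      obtain ⟨w', hw'⟩ := ih h2
      exact ⟨_, Exec.cons htr hw'⟩

lemma exec_top {M : TIOTS Act} (hq : ∀ α s', M.tr .top α s' → s' = .top) :
    ∀ {s : St M.Sig} {w : TWord Act} {t : St M.Sig}, Exec M s w t → s = .top → t = .top := by
  intro s w t h
  induction h with
  | nil s => exact id
  | cons htr hex ih =>
      intro hs; subst hs
      exact ih (hq _ _ htr)

lemma rawProd_top {P Q : TIOTS Act} {comb : St P.Sig → St Q.Sig → St (CState P.Sig Q.Sig)}
    {I O : Set Act} :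
    ∀ α (s' : St (rawProd P Q comb I O).Sig), (rawProd P Q comb I O).tr .top α s' → s' = .top := by
  intro α s' h
  rcases h with ⟨_, _, h, _⟩ | ⟨_, _, h, _⟩ | ⟨_, _, h, _⟩ | ⟨h, _⟩ | ⟨_, _, h⟩
  · exact nomatch h
  · exact nomatch h
  · exact nomatch h
  · exact nomatch h
  · exact h

lemma valid_O_to_A {P : TIOTS Act} {α : TAct Act} (h : TAct.valid P.O α) :
    TAct.valid P.A α := by
  cases α with
  | act a => exact Or.inr h
  | delay d => trivial

lemma valid_inter_left {A B : Set Act} {α : TAct Act} (h : TAct.valid (A ∩ B) α) :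
    TAct.valid A α := by
  cases α with
  | act a => exact h.1
  | delay d => trivial

lemma complete_enabled (P : TIOTS Act) (p : P.Sig) (α : TAct Act) (hv : TAct.valid P.A α) :
    enabled P.complete (.plain p) α := by
  by_cases h1 : enabled (botComplete P) (.plain p) α
  · obtain ⟨s', hs'⟩ := h1
    exact ⟨s', Or.inl hs'⟩
  · refine ⟨.top, Or.inr ⟨⟨p, rfl⟩, ?_, h1, rfl⟩⟩
    cases α with
    | delay d => trivial
    | act a =>
        have hv' : a ∈ P.I ∪ P.O := hv
        rcases hv' with ha | ha
        · exfalso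
          apply h1
          by_cases h2 : enabled P (.plain p) (TAct.act a)
          · obtain ⟨s', hs'⟩ := h2
            exact ⟨s', Or.inl hs'⟩
          · exact ⟨.bot, Or.inr ⟨⟨p, rfl⟩, ⟨a, ha, rfl⟩, h2, rfl⟩⟩
        · exact ha

lemma det_enabled (P : TIOTS Act) (X : Set P.Sig) (α : TAct Act) (hv : TAct.valid P.A α) :
    enabled P.det (.plain X) α :=
  ⟨detSt (post P.complete X α), Or.inl ⟨X, rfl, hv, rfl⟩⟩

lemma det_complete_tr (P : TIOTS Act) (X : Set P.Sig) (α : TAct Act)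
    (s' : St (Set P.Sig)) :
    P.det.complete.tr (.plain X) α s' ↔
      TAct.valid P.A α ∧ s' = detSt (post P.complete X α) := by
  constructor
  · intro h
    rcases h with h | ⟨_, hO, hne, _⟩
    · rcases h with h | ⟨_, ⟨a, ha, hα⟩, hne, _⟩
      · rcases h with ⟨X', hX, hv, hs⟩ | ⟨h, _⟩ | ⟨h, _⟩
        · have hXX : X = X' := by injection hX
          subst hXX
          exact ⟨hv, hs⟩
        · exact nomatch h
        · exact nomatch h
      · exfalso
        subst hα
        exact hne (det_enabled P X (TAct.act a) (Or.inl ha))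
    · exfalso
      apply hne
      obtain ⟨s'', hs''⟩ := det_enabled P X α (valid_O_to_A (P := P) hO)
      exact ⟨s'', Or.inl hs''⟩
  · rintro ⟨hv, hs⟩
    exact Or.inl (Or.inl (Or.inl ⟨X, rfl, hv, hs⟩))

lemma pairSt_plain_inj {σ₀ σ₁ : Type} {p p' : σ₀} {q q' : σ₁}
    (h : St.plain (pairSt p q) = St.plain (pairSt p' q')) : p = p' ∧ q = q' := by
  have h2 : pairSt p q = pairSt p' q' := by injection h
  have h3 : (Sum.inr (p, q) : σ₁ ⊕ σ₀ × σ₁) = Sum.inr (p', q') := by injection h2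
  have h4 : (p, q) = (p', q') := by injection h3
  have hp : p = p' := by injection h4
  have hq : q = q' := by injection h4
  exact ⟨hp, hq⟩

lemma rawProd_sync {P Q : TIOTS Act} {comb : St P.Sig → St Q.Sig → St (CState P.Sig Q.Sig)}
    {I O : Set Act} {p : P.Sig} {q : Q.Sig} {α : TAct Act} {s₀ : St P.Sig} {s₁ : St Q.Sig}
    (hv : TAct.valid (P.A ∩ Q.A) α) (h0 : P.tr (.plain p) α s₀) (h1 : Q.tr (.plain q) α s₁) :
    (rawProd P Q comb I O).tr (.plain (pairSt p q)) α (comb s₀ s₁) :=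
  Or.inr (Or.inr (Or.inl ⟨p, q, rfl, Or.inl ⟨hv, s₀, s₁, h0, h1, rfl⟩⟩))

lemma rawProd_sync_dest {P Q : TIOTS Act}
    {comb : St P.Sig → St Q.Sig → St (CState P.Sig Q.Sig)} {I O : Set Act}
    {p : P.Sig} {q : Q.Sig} {α : TAct Act} {s' : St (CState P.Sig Q.Sig)}
    (hA : Q.A = P.A)
    (h : (rawProd P Q comb I O).tr (.plain (pairSt p q)) α s') :
    TAct.valid (P.A ∩ Q.A) α ∧
      ∃ s₀ s₁, P.tr (.plain p) α s₀ ∧ Q.tr (.plain q) α s₁ ∧ s' = comb s₀ s₁ := by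
  rcases h with ⟨p', s0, he, _⟩ | ⟨q', s1, he, _⟩ | ⟨p', q', he, hy⟩ | ⟨he, _⟩ | ⟨he, _⟩
  · exfalso
    have h2 : pairSt p q = Sum.inl p' := by injection he
    exact nomatch h2
  · exfalso
    have h2 : pairSt p q = Sum.inr (Sum.inl q') := by injection he
    have h3 : (Sum.inr (p, q) : Q.Sig ⊕ P.Sig × Q.Sig) = Sum.inl q' := by injection h2
    exact nomatch h3
  · obtain ⟨hp, hq⟩ := pairSt_plain_inj he
    subst hp; subst hq
    rcases hy with ⟨hv, s₀, s₁, h0, h1, hs⟩ | ⟨a, hα, hmem, _⟩ | ⟨a, hα, hmem, _⟩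
    · exact ⟨hv, s₀, s₁, h0, h1, hs⟩
    · exfalso; rw [hA] at hmem; exact hmem.2 hmem.1
    · exfalso; rw [hA] at hmem; exact hmem.2 hmem.1
  · exact nomatch he
  · exact nomatch he

lemma detSt_bot_mem {σ : Type} {X : Set (St σ)} (h : St.bot ∈ X) : detSt X = .bot := by
  simp [detSt, h]

lemma detSt_plain_case {σ : Type} {X : Set (St σ)} (hb : St.bot ∉ X) (ht : X ≠ {St.top}) :
    detSt X = .plain {p | St.plain p ∈ X} := by
  simp [detSt, hb, ht]

lemma detSt_top_case {σ : Type} : detSt ({St.top} : Set (St σ)) = .top := by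
  have hb : St.bot ∉ ({St.top} : Set (St σ)) := fun h => nomatch (h : St.bot = St.top)
  simp [detSt, hb]

lemma detSt_singleton_plain {σ : Type} (p : σ) :
    detSt ({St.plain p} : Set (St σ)) =
      .plain {p' | St.plain p' ∈ ({St.plain p} : Set (St σ))} := by
  apply detSt_plain_case
  · intro h; exact nomatch (h : St.bot = St.plain p)
  · intro h
    have hm : St.plain p ∈ ({St.top} : Set (St σ)) := h ▸ rfl
    exact nomatch (hm : St.plain p = St.top)

/-- In the non-bot, non-top case of `detSt (post …)`, there is a plain successor. -/
lemma post_plain_exists {P : TIOTS Act} {X : Set P.Sig} {α : TAct Act}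
    (hv : TAct.valid P.A α) (hne : X.Nonempty)
    (hb : St.bot ∉ post P.complete X α) (ht : post P.complete X α ≠ {St.top}) :
    ∃ p ∈ X, ∃ p', P.complete.tr (.plain p) α (.plain p') := by
  obtain ⟨p0, hp0⟩ := hne
  obtain ⟨u, hu⟩ := complete_enabled P p0 α hv
  have humem : u ∈ post P.complete X α := ⟨p0, hp0, hu⟩
  by_cases hall : ∀ v ∈ post P.complete X α, v = St.top
  · exfalso
    apply ht
    ext v
    constructor
    · intro hvmem; exact hall v hvmem
    · intro hveq
      have hut : u = St.top := hall u humem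
      subst hut
      exact hveq ▸ humem
  · push_neg at hall
    obtain ⟨v, hvmem, hvne⟩ := hall
    obtain ⟨p, hpX, hp⟩ := hvmem
    cases v with
    | bot => exact absurd (⟨p, hpX, hp⟩ : St.bot ∈ post P.complete X α) hb
    | top => exact absurd rfl hvne
    | plain p' => exact ⟨p, hpX, p', hp⟩

section Products

variable {P R : TIOTS Act}

/-- Direction 1: a `⊥`-reaching execution of `P^D ∥ R` yields one of `P ∥ R`. -/
lemma dir1 (hA : R.A = P.A) :
    ∀ {sd : St (parC P.det R).Sig} {w : TWord Act} {t : St (parC P.det R).Sig},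
      Exec (parC P.det R) sd w t → t = .bot →
      ((∃ w', Reach (parC P R) w' .bot) ∨
        ∃ (X : Set P.Sig) (q : R.Sig), sd = .plain (pairSt X q) ∧ X.Nonempty ∧
          ∀ p ∈ X, ∃ w', Exec (parC P R) (parC P R).init w' (.plain (pairSt p q))) →
      ∃ w', Reach (parC P R) w' .bot := by
  intro sd w t h
  induction h with
  | nil s =>
      intro ht inv
      rcases inv with done | ⟨X, q, hs, _, _⟩
      · exact done
      · rw [ht] at hs; exact nomatch hs
  | @cons s α s' w1 s'' htr hex ih =>
      intro ht inv
      rcases inv with done | ⟨X, q, hs, hXne, hreach⟩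
      · exact done
      subst hs
      obtain ⟨hv, s₀, s₁, h0, h1, hs'⟩ :=
        rawProd_sync_dest (P := P.det.complete) (Q := R.complete) hA htr
      replace h0 := (det_complete_tr P X α s₀).mp h0
      obtain ⟨hvA, hs0⟩ := h0
      have hvPR : TAct.valid (P.complete.A ∩ R.complete.A) α := hv
      by_cases hbot : St.bot ∈ post P.complete X α
      · -- determinised successor is ⊥
        rw [detSt_bot_mem hbot] at hs0
        subst hs0
        cases s₁ with
        | top =>
            exfalso
            rw [hs'] at hex
            have hT := exec_top rawProd_top hex rfl
            rw [ht] at hT; exact nomatch hT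
        | bot =>
            obtain ⟨p, hpX, hp⟩ := hbot
            obtain ⟨w', hw'⟩ := hreach p hpX
            obtain ⟨w'', hw''⟩ := exec_snoc hw' (rawProd_sync hvPR hp h1)
            exact ⟨w'', hw''⟩
        | plain q' =>
            obtain ⟨p, hpX, hp⟩ := hbot
            obtain ⟨w', hw'⟩ := hreach p hpX
            obtain ⟨w'', hw''⟩ := exec_snoc hw' (rawProd_sync hvPR hp h1)
            exact ⟨w'', hw''⟩
      · by_cases htop : post P.complete X α = {St.top}
        · exfalso
          rw [htop, detSt_top_case] at hs0
          subst hs0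
          cases s₁ <;>
            (rw [hs'] at hex
             have hT := exec_top rawProd_top hex rfl
             rw [ht] at hT; exact nomatch hT)
        · rw [detSt_plain_case hbot htop] at hs0
          subst hs0
          obtain ⟨p, hpX, p', hp'⟩ := post_plain_exists hvA hXne hbot htop
          cases s₁ with
          | top =>
              exfalso
              rw [hs'] at hex
              have hT := exec_top rawProd_top hex rfl
              rw [ht] at hT; exact nomatch hT
          | bot =>
              obtain ⟨w', hw'⟩ := hreach p hpX
              obtain ⟨w'', hw''⟩ := exec_snoc hw' (rawProd_sync hvPR hp' h1)
              exact ⟨w'', hw''⟩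
          | plain q' =>
              apply ih ht
              right
              refine ⟨{p'' | St.plain p'' ∈ post P.complete X α}, q', hs',
                ⟨p', ⟨p, hpX, hp'⟩⟩, ?_⟩
              intro p'' hp''
              obtain ⟨p1, hp1X, hp1⟩ := hp''
              obtain ⟨w', hw'⟩ := hreach p1 hp1X
              exact exec_snoc hw' (rawProd_sync hvPR hp1 h1)

/-- Direction 2: a `⊥`-reaching execution of `P ∥ R` yields one of `P^D ∥ R`. -/
lemma dir2 (hA : R.A = P.A) :
    ∀ {sp : St (parC P R).Sig} {w : TWord Act} {t : St (parC P R).Sig},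
      Exec (parC P R) sp w t → t = .bot →
      ((sp = St.bot ∧ ∃ w', Reach (parC P.det R) w' .bot) ∨
        ∃ (p : P.Sig) (X : Set P.Sig) (q : R.Sig), sp = .plain (pairSt p q) ∧ p ∈ X ∧
          ∃ w', Exec (parC P.det R) (parC P.det R).init w' (.plain (pairSt X q))) →
      ∃ w', Reach (parC P.det R) w' .bot := by
  intro sp w t h
  induction h with
  | nil s =>
      intro ht inv
      rcases inv with ⟨_, done⟩ | ⟨p, X, q, hs, _, _⟩
      · exact done
      · rw [ht] at hs; exact nomatch hs
  | @cons s α s' w1 s'' htr hex ih =>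
      intro ht inv
      rcases inv with ⟨_, done⟩ | ⟨p, X, q, hs, hpX, wD, hwD⟩
      · exact done
      subst hs
      obtain ⟨hv, s₀, s₁, h0, h1, hs'⟩ :=
        rawProd_sync_dest (P := P.complete) (Q := R.complete) hA htr
      have hvA : TAct.valid P.A α := valid_inter_left hv
      have hvDR : TAct.valid (P.det.complete.A ∩ R.complete.A) α := hv
      have hdet : (parC P.det R).tr (.plain (pairSt X q)) α
          (stPar (detSt (post P.complete X α)) s₁) :=
        rawProd_sync hvDR ((det_complete_tr P X α _).mpr ⟨hvA, rfl⟩) h1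
      cases s₁ with
      | top =>
          exfalso
          have hstop : stPar s₀ (St.top (σ := R.Sig)) = St.top := by
            cases s₀ <;> rfl
          have hT := exec_top rawProd_top hex (hs'.trans hstop)
          rw [ht] at hT; exact nomatch hT
      | bot =>
          cases s₀ with
          | top =>
              exfalso
              rw [hs'] at hex
              have hT := exec_top rawProd_top hex rfl
              rw [ht] at hT; exact nomatch hT
          | bot =>
              have hmem : St.bot ∈ post P.complete X α := ⟨p, hpX, h0⟩
              have hdet := Eq.mp (congrArg (fun z => (parC P.det R).tr (.plain (pairSt X q)) α (stPar z St.bot)) (detSt_bot_mem hmem)) hdet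
              exact exec_snoc hwD hdet
          | plain p' =>
              by_cases hbot : St.bot ∈ post P.complete X α
              · have hdet := Eq.mp (congrArg (fun z => (parC P.det R).tr (.plain (pairSt X q)) α (stPar z St.bot)) (detSt_bot_mem hbot)) hdet
                exact exec_snoc hwD hdet
              · have htop : post P.complete X α ≠ {St.top} := by
                  intro hEq
                  have hm : St.plain p' ∈ post P.complete X α := ⟨p, hpX, h0⟩
                  rw [hEq] at hm
                  exact nomatch hm
                have hdet := Eq.mp (congrArg (fun z => (parC P.det R).tr (.plain (pairSt X q)) α (stPar z St.bot)) (detSt_plain_case hbot htop)) hdet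
                exact exec_snoc hwD hdet
      | plain q' =>
          cases s₀ with
          | top =>
              exfalso
              rw [hs'] at hex
              have hT := exec_top rawProd_top hex rfl
              rw [ht] at hT; exact nomatch hT
          | bot =>
              have hmem : St.bot ∈ post P.complete X α := ⟨p, hpX, h0⟩
              have hdet := Eq.mp (congrArg (fun z => (parC P.det R).tr (.plain (pairSt X q)) α (stPar z (St.plain q'))) (detSt_bot_mem hmem)) hdet
              exact exec_snoc hwD hdet
          | plain p' =>
              by_cases hbot : St.bot ∈ post P.complete X α
              · have hdet := Eq.mp (congrArg (fun z => (parC P.det R).tr (.plain (pairSt X q)) α (stPar z (St.plain q'))) (detSt_bot_mem hbot)) hdet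
                exact exec_snoc hwD hdet
              · have htop : post P.complete X α ≠ {St.top} := by
                  intro hEq
                  have hm : St.plain p' ∈ post P.complete X α := ⟨p, hpX, h0⟩
                  rw [hEq] at hm
                  exact nomatch hm
                have hdet := Eq.mp (congrArg (fun z => (parC P.det R).tr (.plain (pairSt X q)) α (stPar z (St.plain q'))) (detSt_plain_case hbot htop)) hdet
                apply ih ht
                right
                exact ⟨p', {p'' | St.plain p'' ∈ post P.complete X α}, q', hs',
                  ⟨p, hpX, h0⟩, exec_snoc hwD hdet⟩

/-- The central equivalence of `⊥`-reachability. -/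
lemma bot_iff (hA : R.A = P.A) :
    (∃ w, Reach (parC P R) w .bot) ↔ (∃ w, Reach (parC P.det R) w .bot) := by
  have topcase : ∀ (hPi : (parC P R).init = .top) (hDi : (parC P.det R).init = .top),
      (∃ w, Reach (parC P R) w .bot) ↔ (∃ w, Reach (parC P.det R) w .bot) := by
    intro hPi hDi
    constructor
    · rintro ⟨w, hw⟩
      exfalso
      have hT := exec_top rawProd_top hw hPi
      exact nomatch hT
    · rintro ⟨w, hw⟩
      exfalso
      have hT := exec_top rawProd_top hw hDi
      exact nomatch hT
  have botcase : ∀ (hPi : (parC P R).init = .bot) (hDi : (parC P.det R).init = .bot),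
      (∃ w, Reach (parC P R) w .bot) ↔ (∃ w, Reach (parC P.det R) w .bot) := by
    intro hPi hDi
    constructor
    · intro _
      refine ⟨[], ?_⟩
      show Exec (parC P.det R) (parC P.det R).init [] .bot
      rw [hDi]; exact Exec.nil _
    · intro _
      refine ⟨[], ?_⟩
      show Exec (parC P R) (parC P R).init [] .bot
      rw [hPi]; exact Exec.nil _
  rcases hp : P.init with p | _ | _ <;> rcases hr : R.init with q | _ | _
  -- plain, plain
  · have hPi : (parC P R).init = .plain (pairSt p q) := by
      show stPar P.init R.init = _
      rw [hp, hr]; rfl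
    have hDi : (parC P.det R).init =
        .plain (pairSt {p' | St.plain p' ∈ ({St.plain p} : Set (St P.Sig))} q) := by
      show stPar (detSt {P.init}) R.init = _
      rw [hp, hr, detSt_singleton_plain]; rfl
    constructor
    · rintro ⟨w, hw⟩
      apply dir2 hA hw rfl
      right
      refine ⟨p, {p' | St.plain p' ∈ ({St.plain p} : Set (St P.Sig))}, q, hPi, rfl, [], ?_⟩
      rw [hDi]; exact Exec.nil _
    · rintro ⟨w, hw⟩
      apply dir1 hA hw rfl
      right
      refine ⟨{p' | St.plain p' ∈ ({St.plain p} : Set (St P.Sig))}, q, hDi, ⟨p, rfl⟩, ?_⟩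
      intro p'' hp''
      have hpp : p'' = p := by
        have h2 : St.plain p'' = St.plain p := hp''
        injection h2
      subst hpp
      refine ⟨[], ?_⟩
      rw [hPi]; exact Exec.nil _
  -- plain, bot
  · apply botcase
    · show stPar P.init R.init = _
      rw [hp, hr]; rfl
    · show stPar (detSt {P.init}) R.init = _
      rw [hp, hr, detSt_singleton_plain]; rfl
  -- plain, top
  · apply topcase
    · show stPar P.init R.init = _
      rw [hp, hr]; rfl
    · show stPar (detSt {P.init}) R.init = _
      rw [hp, hr, detSt_singleton_plain]; rfl
  -- bot, plain
  · apply botcase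
    · show stPar P.init R.init = _
      rw [hp, hr]; rfl
    · show stPar (detSt {P.init}) R.init = _
      rw [hp, hr]; rw [show detSt ({St.bot} : Set (St P.Sig)) = St.bot from detSt_bot_mem rfl]; rfl
  -- bot, bot
  · apply botcase
    · show stPar P.init R.init = _
      rw [hp, hr]; rfl
    · show stPar (detSt {P.init}) R.init = _
      rw [hp, hr]; rw [show detSt ({St.bot} : Set (St P.Sig)) = St.bot from detSt_bot_mem rfl]; rfl
  -- bot, top
  · apply topcase
    · show stPar P.init R.init = _
      rw [hp, hr]; rfl
    · show stPar (detSt {P.init}) R.init = _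
      rw [hp, hr]; rw [show detSt ({St.bot} : Set (St P.Sig)) = St.bot from detSt_bot_mem rfl]; rfl
  -- top, plain
  · apply topcase
    · show stPar P.init R.init = _
      rw [hp, hr]; rfl
    · show stPar (detSt {P.init}) R.init = _
      rw [hp, hr, detSt_top_case]; rfl
  -- top, bot
  · apply topcase
    · show stPar P.init R.init = _
      rw [hp, hr]; rfl
    · show stPar (detSt {P.init}) R.init = _
      rw [hp, hr, detSt_top_case]; rfl
  -- top, top
  · apply topcase
    · show stPar P.init R.init = _
      rw [hp, hr]; rfl
    · show stPar (detSt {P.init}) R.init = _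
      rw [hp, hr, detSt_top_case]; rfl

end Products

lemma det_deterministic (P : TIOTS Act) : Deterministic P.det := by
  intro s α s' s'' h1 h2
  rcases h1 with ⟨X, hs, hv1, h1'⟩ | ⟨hs, hv1, h1'⟩ | ⟨hs, hv1, h1'⟩ <;> subst hs <;>
    rcases h2 with ⟨Y, hs2, hv2, h2'⟩ | ⟨hs2, hv2, h2'⟩ | ⟨hs2, hv2, h2'⟩
  · have hXY : X = Y := by injection hs2
    subst hXY
    rw [h1', h2']
  · exact nomatch hs2
  · exact nomatch hs2
  · exact nomatch hs2
  · rw [h1', h2']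
  · exact nomatch hs2
  · exact nomatch hs2
  · exact nomatch hs2
  · rw [h1', h2']

lemma env_alphabet {P R : TIOTS Act} (hEnv : Env P R) : R.A = P.A := by
  show R.I ∪ R.O = P.I ∪ P.O
  rw [hEnv.1, hEnv.2]
  exact Set.union_comm _ _

lemma det_sequiv (P : TIOTS Act) : SEquiv P P.det := by
  constructor
  · refine ⟨rfl, rfl, ?_⟩
    intro R hWR hEnv hBF w hw
    obtain ⟨w', hw'⟩ := (bot_iff (env_alphabet hEnv)).mpr ⟨w, hw⟩
    exact hBF w' hw'
  · refine ⟨rfl, rfl, ?_⟩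
    intro R hWR hEnv hBF w hw
    have hA : R.A = P.A := by
      show R.I ∪ R.O = P.I ∪ P.O
      rw [hEnv.1, hEnv.2]
      exact Set.union_comm _ _
    obtain ⟨w', hw'⟩ := (bot_iff hA).mp ⟨w, hw⟩
    exact hBF w' hw'

end DetAux

/-- For every TIOTS `P`, the determinisation `P^D` is a deterministic
TIOTS and `P ≃ P^D`; hence every TIOTS is substitutively equivalent to a
deterministic TIOTS. -/
theorem determinisation_substitutively_equivalent {Act : Type} (P : TIOTS Act) (hP : WF P) :
    (Deterministic P.det ∧ SEquiv P P.det) ∧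
    ∃ D : TIOTS Act, Deterministic D ∧ SEquiv P D :=
  ⟨⟨det_deterministic P, det_sequiv P⟩, P.det, det_deterministic P, det_sequiv P⟩

end TSpec
end

section
/- Let G₀ and G₁ be affine component strategies over alphabet (I, O). For every environment strategy G (a strategy over the complementary alphabet, with inputs O and outputs I) and every coin strategy h, the plays G₀ ∥_h G and G₁ ∥_h G are both ⊥-free if and only if the play (G₀ + G₁) ∥_h G is ⊥-free. -/
open Classical

namespace TSpec

section Aux
variable {Act : Type}

/-- Step sequences: like `Exec` but remembering the list of actions. -/
inductive Steps (P : TIOTS Act) : St P.Sig → List (TAct Act) → St P.Sig → Prop where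
  | nil (s : St P.Sig) : Steps P s [] s
  | cons {s : St P.Sig} {α : TAct Act} {s' : St P.Sig} {l : List (TAct Act)} {s'' : St P.Sig} :
      P.tr s α s' → Steps P s' l s'' → Steps P s (α :: l) s''

/-- The timed word of a list of timed actions. -/
def wordOf (l : List (TAct Act)) : TWord Act := l.foldr (fun α acc => tcat [α] acc) []

lemma Steps.toExec {P : TIOTS Act} {s : St P.Sig} {l : List (TAct Act)} {t : St P.Sig}
    (h : Steps P s l t) : Exec P s (wordOf l) t := by
  induction h with
  | nil s => exact Exec.nil s
  | cons htr _ ih => exact Exec.cons htr ih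

lemma Steps.snoc {P : TIOTS Act} {s : St P.Sig} {l : List (TAct Act)} {t : St P.Sig}
    {α : TAct Act} {t' : St P.Sig} (h : Steps P s l t) (h2 : P.tr t α t') :
    Steps P s (l ++ [α]) t' := by
  induction h with
  | nil s => exact Steps.cons h2 (Steps.nil _)
  | cons htr _ ih => exact Steps.cons htr (ih h2)

lemma exec_pres {P : TIOTS Act} {Q : St P.Sig → Prop}
    (hstep : ∀ s α s', P.tr s α s' → Q s → Q s') :
    ∀ {s w s'}, Exec P s w s' → Q s → Q s' := by
  intro s w s' hE
  induction hE with
  | nil s => exact id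
  | cons htr _ ih => exact fun hq => ih (hstep _ _ _ htr hq)

lemma valid_of_mem_O {P : TIOTS Act} {α : TAct Act} (hv : TAct.valid P.O α) :
    TAct.valid P.A α := by
  cases α with
  | act a => exact Or.inr hv
  | delay d => trivial

variable {G₀ G₁ : TIOTS Act}

lemma S_tr_loneL_iff {p₀ : G₀.Sig} {α : TAct Act} {s' : St (CState G₀.Sig G₁.Sig)} :
    (stratPlus G₀ G₁).tr (.plain (Sum.inl p₀)) α s' ↔
      ∃ t₀, G₀.tr (.plain p₀) α t₀ ∧ s' = embL t₀ := by
  constructor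
  · rintro (⟨p, t₀, hs, htr, rfl⟩ | ⟨q, t₁, hs, _, _⟩ | ⟨p, q, hs, _⟩ | ⟨hs, _⟩ | ⟨hs, _⟩)
    · cases hs; exact ⟨t₀, htr, rfl⟩
    · injection hs with h; injection h
    · injection hs with h; injection h
    · injection hs
    · injection hs
  · rintro ⟨t₀, htr, rfl⟩
    exact Or.inl ⟨p₀, t₀, rfl, htr, rfl⟩

lemma S_tr_loneR_iff {p₁ : G₁.Sig} {α : TAct Act} {s' : St (CState G₀.Sig G₁.Sig)} :
    (stratPlus G₀ G₁).tr (.plain (Sum.inr (Sum.inl p₁))) α s' ↔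
      ∃ t₁, G₁.tr (.plain p₁) α t₁ ∧ s' = embR t₁ := by
  constructor
  · rintro (⟨p, t₀, hs, _, _⟩ | ⟨q, t₁, hs, htr, rfl⟩ | ⟨p, q, hs, _⟩ | ⟨hs, _⟩ | ⟨hs, _⟩)
    · injection hs with h; injection h
    · cases hs; exact ⟨t₁, htr, rfl⟩
    · injection hs with h; injection h with h2; injection h2
    · injection hs
    · injection hs
  · rintro ⟨t₁, htr, rfl⟩
    exact Or.inr (Or.inl ⟨p₁, t₁, rfl, htr, rfl⟩)

lemma S_tr_pair_iff (hA : G₀.A = G₁.A) (hWF₀ : WF G₀)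
    {p₀ : G₀.Sig} {p₁ : G₁.Sig} {α : TAct Act} {s' : St (CState G₀.Sig G₁.Sig)} :
    (stratPlus G₀ G₁).tr (.plain (pairSt p₀ p₁)) α s' ↔
      ∃ t₀ t₁, G₀.tr (.plain p₀) α t₀ ∧ G₁.tr (.plain p₁) α t₁ ∧ s' = stOr t₀ t₁ := by
  constructor
  · rintro (⟨p, t₀, hs, _, _⟩ | ⟨q, t₁, hs, _, _⟩ | ⟨p, q, hs, hc⟩ | ⟨hs, _⟩ | ⟨hs, _⟩)
    · injection hs with h; injection h
    · injection hs with h; injection h with h2; injection h2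
    · injection hs with h; injection h with h2; injection h2 with h3
      cases h3
      rcases hc with ⟨_, t₀, t₁, h₀, h₁, rfl⟩ | ⟨a, _, ha, _⟩ | ⟨a, _, ha, _⟩
      · exact ⟨t₀, t₁, h₀, h₁, rfl⟩
      · rw [hA] at ha; exact absurd ha.1 ha.2
      · rw [hA] at ha; exact absurd ha.1 ha.2
    · simp at hs
    · simp at hs
  · rintro ⟨t₀, t₁, h₀, h₁, rfl⟩
    refine Or.inr (Or.inr (Or.inl ⟨p₀, p₁, rfl, Or.inl ⟨?_, t₀, t₁, h₀, h₁, rfl⟩⟩))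
    have hv : TAct.valid G₀.A α := hWF₀.2.1 _ _ _ h₀
    cases α with
    | act a => exact ⟨hv, by rw [← hA]; exact hv⟩
    | delay d => trivial

lemma mvSet_loneL {p₀ : G₀.Sig} :
    mvSet (stratPlus G₀ G₁) (Sum.inl p₀) = mvSet G₀ p₀ := by
  ext α
  simp only [mvSet, Set.mem_setOf_eq, enabled, S_tr_loneL_iff]
  constructor
  · rintro ⟨⟨s', hs'⟩, hv⟩
    obtain ⟨t₀, htr, _⟩ := S_tr_loneL_iff.mp hs'
    exact ⟨⟨t₀, htr⟩, hv⟩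
  · rintro ⟨⟨t₀, htr⟩, hv⟩
    exact ⟨⟨embL t₀, S_tr_loneL_iff.mpr ⟨t₀, htr, rfl⟩⟩, hv⟩

lemma mvSet_loneR {p₁ : G₁.Sig} (hO : G₀.O = G₁.O) :
    mvSet (stratPlus G₀ G₁) (Sum.inr (Sum.inl p₁)) = mvSet G₁ p₁ := by
  ext α
  simp only [mvSet, Set.mem_setOf_eq, enabled, S_tr_loneR_iff]
  constructor
  · rintro ⟨⟨s', hs'⟩, hv⟩
    obtain ⟨t₁, htr, _⟩ := S_tr_loneR_iff.mp hs'
    refine ⟨⟨t₁, htr⟩, ?_⟩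
    show TAct.valid G₁.O α
    rw [← hO]; exact hv
  · rintro ⟨⟨t₁, htr⟩, hv⟩
    refine ⟨⟨embR t₁, S_tr_loneR_iff.mpr ⟨t₁, htr, rfl⟩⟩, ?_⟩
    show TAct.valid G₀.O α
    rw [hO]; exact hv

lemma mvSet_pair (hA : G₀.A = G₁.A) (hWF₀ : WF G₀)
    {p₀ : G₀.Sig} {p₁ : G₁.Sig} (hmv : mvSet G₀ p₀ = mvSet G₁ p₁) :
    mvSet (stratPlus G₀ G₁) (pairSt p₀ p₁) = mvSet G₀ p₀ := by
  ext α
  simp only [mvSet, Set.mem_setOf_eq, enabled, S_tr_pair_iff hA hWF₀]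
  constructor
  · rintro ⟨⟨s', hs'⟩, hv⟩
    obtain ⟨t₀, t₁, h₀, h₁, _⟩ := (S_tr_pair_iff hA hWF₀).mp hs'
    exact ⟨⟨t₀, h₀⟩, hv⟩
  · rintro ⟨⟨t₀, h₀⟩, hv⟩
    have hmem : α ∈ mvSet G₁ p₁ := by
      rw [← hmv]; exact ⟨⟨t₀, h₀⟩, hv⟩
    obtain ⟨⟨t₁, h₁⟩, _⟩ := hmem
    exact ⟨⟨stOr t₀ t₁, (S_tr_pair_iff hA hWF₀).mpr ⟨t₀, t₁, h₀, h₁, rfl⟩⟩, hv⟩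


lemma fired_congr {GP GP' GQ : TIOTS Act} (hI : GP.I = GP'.I) (hO : GP.O = GP'.O)
    {p : GP.Sig} {p' : GP'.Sig} (hmv : mvSet GP p = mvSet GP' p')
    (h : Coin Act) (q : GQ.Sig) (w : TWord Act) (α : TAct Act) :
    fired GP GQ h p q w α ↔ fired GP' GQ h p' q w α := by
  have hA : GP.A = GP'.A := by unfold TIOTS.A; rw [hI, hO]
  cases α with
  | act a => simp [fired, firedInput, proposesA, hmv, hI, hA]
  | delay d => simp [fired, proposesD, hmv]

lemma enabled_of_fired {GA GB G : TIOTS Act} {h : Coin Act}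
    (hGB : IsStrategy GB) (hIAB : GA.I = GB.I) (hGOA : G.O = GA.I)
    {p : GA.Sig} {p' : GB.Sig} {q : G.Sig} {w : TWord Act} {α : TAct Act}
    (hmv : mvSet GA p = mvSet GB p')
    (hf : fired GA G h p q w α) (hv : TAct.valid GA.A α) :
    enabled GB (.plain p') α := by
  cases α with
  | delay d =>
    obtain ⟨hd, -⟩ := hf
    simp only [proposesD, hmv] at hd
    exact hd.1
  | act a =>
    rcases hf with hin | ⟨hp, -⟩ | ⟨hq, -⟩
    · have haI : a ∈ GA.I := by
        have hva : a ∈ GA.A := hv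
        rcases hin with ⟨h1, -⟩ | ⟨h1, h2⟩
        · exact h1
        · rcases h1 with h1 | h1
          · exact h1
          · exact absurd ⟨hva, Or.inl h1⟩ h2
      have hmem : TAct.act a ∈ eb GB p' := by
        rw [(hGB.2.2.2 p').1]
        exact Or.inl ⟨a, hIAB ▸ haI, rfl⟩
      exact hmem
    · simp only [proposesA, hmv] at hp
      exact hp.1
    · have haI : a ∈ GA.I := hGOA ▸ hq.2
      have hmem : TAct.act a ∈ eb GB p' := by
        rw [(hGB.2.2.2 p').1]
        exact Or.inl ⟨a, hIAB ▸ haI, rfl⟩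
      exact hmem

lemma steps_nil' {P : TIOTS Act} {s : St P.Sig} (hs : P.init = s) :
    Steps P P.init [] s := hs ▸ Steps.nil _


/-- Invariant for the composite play `(G₀ + G₁) ∥ₕ G`. -/
def GoodC (G₀ G₁ G : TIOTS Act) (h : Coin Act) :
    St (CState G₀.Sig G₁.Sig × G.Sig × TWord Act) → Prop
  | .top => True
  | .bot => ∃ l, Steps (play G₀ G h) (play G₀ G h).init l .bot ∨
      Steps (play G₁ G h) (play G₁ G h).init l .bot
  | .plain (Sum.inl p₀, q, w) =>
      ∃ l, Steps (play G₀ G h) (play G₀ G h).init l (.plain (p₀, q, w))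
  | .plain (Sum.inr (Sum.inl p₁), q, w) =>
      ∃ l, Steps (play G₁ G h) (play G₁ G h).init l (.plain (p₁, q, w))
  | .plain (Sum.inr (Sum.inr (p₀, p₁)), q, w) =>
      (∃ u, Steps G₀ G₀.init u (.plain p₀) ∧ Steps G₁ G₁.init u (.plain p₁)) ∧
      (∃ l, Steps (play G₀ G h) (play G₀ G h).init l (.plain (p₀, q, w))) ∧
      (∃ l, Steps (play G₁ G h) (play G₁ G h).init l (.plain (p₁, q, w)))

/-- Invariant for the left play `G₀ ∥ₕ G`. -/
def Good0 (G₀ G₁ G : TIOTS Act) (h : Coin Act) :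
    St (G₀.Sig × G.Sig × TWord Act) → Prop
  | .top => True
  | .bot => ∃ l, Steps (play (stratPlus G₀ G₁) G h) (play (stratPlus G₀ G₁) G h).init l .bot
  | .plain (p₀, q, w) =>
      (∃ l, Steps (play (stratPlus G₀ G₁) G h) (play (stratPlus G₀ G₁) G h).init l .bot) ∨
      (∃ p₁, (∃ u, Steps G₀ G₀.init u (.plain p₀) ∧ Steps G₁ G₁.init u (.plain p₁)) ∧
        ∃ l, Steps (play (stratPlus G₀ G₁) G h) (play (stratPlus G₀ G₁) G h).init l
          (.plain (pairSt p₀ p₁, q, w))) ∨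
      (∃ l, Steps (play (stratPlus G₀ G₁) G h) (play (stratPlus G₀ G₁) G h).init l
          (.plain (Sum.inl p₀, q, w)))

/-- Invariant for the right play `G₁ ∥ₕ G`. -/
def Good1 (G₀ G₁ G : TIOTS Act) (h : Coin Act) :
    St (G₁.Sig × G.Sig × TWord Act) → Prop
  | .top => True
  | .bot => ∃ l, Steps (play (stratPlus G₀ G₁) G h) (play (stratPlus G₀ G₁) G h).init l .bot
  | .plain (p₁, q, w) =>
      (∃ l, Steps (play (stratPlus G₀ G₁) G h) (play (stratPlus G₀ G₁) G h).init l .bot) ∨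
      (∃ p₀, (∃ u, Steps G₀ G₀.init u (.plain p₀) ∧ Steps G₁ G₁.init u (.plain p₁)) ∧
        ∃ l, Steps (play (stratPlus G₀ G₁) G h) (play (stratPlus G₀ G₁) G h).init l
          (.plain (pairSt p₀ p₁, q, w))) ∨
      (∃ l, Steps (play (stratPlus G₀ G₁) G h) (play (stratPlus G₀ G₁) G h).init l
          (.plain (Sum.inr (Sum.inl p₁), q, w)))


variable {G : TIOTS Act} {h : Coin Act}

lemma GoodC_step (hG₀ : IsStrategy G₀) (hG₁ : IsStrategy G₁) (haff : Affine G₀ G₁)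
    {s α s'} (htr : (play (stratPlus G₀ G₁) G h).tr s α s')
    (hg : GoodC G₀ G₁ G h s) : GoodC G₀ G₁ G h s' := by
  have hA : G₀.A = G₁.A := by unfold TIOTS.A; rw [haff.1, haff.2.1]
  rcases htr with ⟨c, q, w, hs, hf, s₀, sG, hst0, hstG, rfl⟩ | ⟨rfl, -, rfl⟩ | ⟨rfl, -, rfl⟩
  · subst hs
    rcases c with p₀ | p₁ | ⟨p₀, p₁⟩
    · -- lone left
      obtain ⟨l, hl⟩ := hg
      have hfm : fired G₀ G h p₀ q w α := (fired_congr (GP := stratPlus G₀ G₁) (GP' := G₀) rfl rfl mvSet_loneL h q w α).mp hf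
      rcases hst0 with ⟨hv, hS⟩ | ⟨hv, rfl⟩
      · obtain ⟨t₀, ht₀, rfl⟩ := S_tr_loneL_iff.mp hS
        have hv0 : TAct.valid G₀.A α := hv
        have hP : (play G₀ G h).tr (.plain (p₀, q, w)) α (stPlay (tcat w [α]) t₀ sG) :=
          Or.inl ⟨p₀, q, w, rfl, hfm, t₀, sG, Or.inl ⟨hv0, ht₀⟩, hstG, rfl⟩
        have hl' := hl.snoc hP
        rcases t₀ with t | _ | _ <;> rcases sG with g | _ | _ <;>
          first
            | trivial
            | exact ⟨l ++ [α], hl'⟩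
            | exact ⟨l ++ [α], Or.inl hl'⟩
      · have hnv : ¬ TAct.valid G₀.A α := hv
        have hP : (play G₀ G h).tr (.plain (p₀, q, w)) α (stPlay (tcat w [α]) (.plain p₀) sG) :=
          Or.inl ⟨p₀, q, w, rfl, hfm, .plain p₀, sG, Or.inr ⟨hnv, rfl⟩, hstG, rfl⟩
        have hl' := hl.snoc hP
        rcases sG with g | _ | _ <;>
          first
            | trivial
            | exact ⟨l ++ [α], hl'⟩
            | exact ⟨l ++ [α], Or.inl hl'⟩
    · -- lone right
      obtain ⟨l, hl⟩ := hg
      have hfm : fired G₁ G h p₁ q w α :=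
        (fired_congr (GP := stratPlus G₀ G₁) (GP' := G₁) haff.1 haff.2.1 (mvSet_loneR haff.2.1) h q w α).mp hf
      rcases hst0 with ⟨hv, hS⟩ | ⟨hv, rfl⟩
      · obtain ⟨t₁, ht₁, rfl⟩ := S_tr_loneR_iff.mp hS
        have hv0 : TAct.valid G₀.A α := hv
        have hv1 : TAct.valid G₁.A α := hA ▸ hv0
        have hP : (play G₁ G h).tr (.plain (p₁, q, w)) α (stPlay (tcat w [α]) t₁ sG) :=
          Or.inl ⟨p₁, q, w, rfl, hfm, t₁, sG, Or.inl ⟨hv1, ht₁⟩, hstG, rfl⟩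
        have hl' := hl.snoc hP
        rcases t₁ with t | _ | _ <;> rcases sG with g | _ | _ <;>
          first
            | trivial
            | exact ⟨l ++ [α], hl'⟩
            | exact ⟨l ++ [α], Or.inr hl'⟩
      · have hnv0 : ¬ TAct.valid G₀.A α := hv
        have hnv1 : ¬ TAct.valid G₁.A α := fun x => hnv0 (by rw [hA]; exact x)
        have hP : (play G₁ G h).tr (.plain (p₁, q, w)) α (stPlay (tcat w [α]) (.plain p₁) sG) :=
          Or.inl ⟨p₁, q, w, rfl, hfm, .plain p₁, sG, Or.inr ⟨hnv1, rfl⟩, hstG, rfl⟩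
        have hl' := hl.snoc hP
        rcases sG with g | _ | _ <;>
          first
            | trivial
            | exact ⟨l ++ [α], hl'⟩
            | exact ⟨l ++ [α], Or.inr hl'⟩
    · -- pair
      obtain ⟨⟨u, hu₀, hu₁⟩, ⟨l₀, hl₀⟩, ⟨l₁, hl₁⟩⟩ := hg
      have hmv01 : mvSet G₀ p₀ = mvSet G₁ p₁ :=
        haff.2.2 (wordOf u) p₀ p₁ hu₀.toExec hu₁.toExec
      have hmvS : mvSet (stratPlus G₀ G₁) (pairSt p₀ p₁) = mvSet G₀ p₀ :=
        mvSet_pair hA hG₀.1 hmv01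
      have hf₀ : fired G₀ G h p₀ q w α := (fired_congr (GP := stratPlus G₀ G₁) (GP' := G₀) rfl rfl hmvS h q w α).mp hf
      have hf₁ : fired G₁ G h p₁ q w α :=
        (fired_congr (GP := stratPlus G₀ G₁) (GP' := G₁) haff.1 haff.2.1 (hmvS.trans hmv01) h q w α).mp hf
      rcases hst0 with ⟨hv, hS⟩ | ⟨hv, rfl⟩
      · obtain ⟨t₀, t₁, ht₀, ht₁, rfl⟩ := (S_tr_pair_iff hA hG₀.1).mp hS
        have hv0 : TAct.valid G₀.A α := hv
        have hv1 : TAct.valid G₁.A α := hA ▸ hv0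
        have hP₀ : (play G₀ G h).tr (.plain (p₀, q, w)) α (stPlay (tcat w [α]) t₀ sG) :=
          Or.inl ⟨p₀, q, w, rfl, hf₀, t₀, sG, Or.inl ⟨hv0, ht₀⟩, hstG, rfl⟩
        have hP₁ : (play G₁ G h).tr (.plain (p₁, q, w)) α (stPlay (tcat w [α]) t₁ sG) :=
          Or.inl ⟨p₁, q, w, rfl, hf₁, t₁, sG, Or.inl ⟨hv1, ht₁⟩, hstG, rfl⟩
        have hl₀' := hl₀.snoc hP₀
        have hl₁' := hl₁.snoc hP₁
        rcases t₀ with t0 | _ | _ <;> rcases t₁ with t1 | _ | _ <;> rcases sG with g | _ | _ <;>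
          first
            | trivial
            | exact ⟨l₀ ++ [α], hl₀'⟩
            | exact ⟨l₁ ++ [α], hl₁'⟩
            | exact ⟨l₀ ++ [α], Or.inl hl₀'⟩
            | exact ⟨l₁ ++ [α], Or.inr hl₁'⟩
            | exact ⟨⟨u ++ [α], hu₀.snoc ht₀, hu₁.snoc ht₁⟩, ⟨l₀ ++ [α], hl₀'⟩, ⟨l₁ ++ [α], hl₁'⟩⟩
      · have hnv0 : ¬ TAct.valid G₀.A α := hv
        have hnv1 : ¬ TAct.valid G₁.A α := fun x => hnv0 (by rw [hA]; exact x)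
        have hP₀ : (play G₀ G h).tr (.plain (p₀, q, w)) α (stPlay (tcat w [α]) (.plain p₀) sG) :=
          Or.inl ⟨p₀, q, w, rfl, hf₀, .plain p₀, sG, Or.inr ⟨hnv0, rfl⟩, hstG, rfl⟩
        have hP₁ : (play G₁ G h).tr (.plain (p₁, q, w)) α (stPlay (tcat w [α]) (.plain p₁) sG) :=
          Or.inl ⟨p₁, q, w, rfl, hf₁, .plain p₁, sG, Or.inr ⟨hnv1, rfl⟩, hstG, rfl⟩
        have hl₀' := hl₀.snoc hP₀
        have hl₁' := hl₁.snoc hP₁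
        rcases sG with g | _ | _ <;>
          first
            | trivial
            | exact ⟨l₀ ++ [α], Or.inl hl₀'⟩
            | exact ⟨⟨u, hu₀, hu₁⟩, ⟨l₀ ++ [α], hl₀'⟩, ⟨l₁ ++ [α], hl₁'⟩⟩
  · exact hg
  · trivial


lemma GoodC_init : GoodC G₀ G₁ G h ((play (stratPlus G₀ G₁) G h).init) := by
  show GoodC G₀ G₁ G h (stPlay [] (stOr G₀.init G₁.init) G.init)
  rcases h0 : G₀.init with p₀ | _ | _ <;> rcases h1 : G₁.init with p₁ | _ | _ <;>
      rcases h2 : G.init with qg | _ | _ <;>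
    first
      | trivial
      | exact ⟨⟨[], steps_nil' h0, steps_nil' h1⟩,
          ⟨[], steps_nil' (by show stPlay [] G₀.init G.init = _; rw [h0, h2]; rfl)⟩,
          ⟨[], steps_nil' (by show stPlay [] G₁.init G.init = _; rw [h1, h2]; rfl)⟩⟩
      | exact ⟨[], steps_nil' (by show stPlay [] G₀.init G.init = _; rw [h0, h2]; rfl)⟩
      | exact ⟨[], steps_nil' (by show stPlay [] G₁.init G.init = _; rw [h1, h2]; rfl)⟩
      | exact ⟨[], Or.inl (steps_nil' (by show stPlay [] G₀.init G.init = _; rw [h0, h2]; rfl))⟩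
      | exact ⟨[], Or.inr (steps_nil' (by show stPlay [] G₁.init G.init = _; rw [h1, h2]; rfl))⟩


lemma Good0_step (hG₀ : IsStrategy G₀) (hG₁ : IsStrategy G₁) (haff : Affine G₀ G₁)
    (hGO : G.O = G₀.I) {s α s'} (htr : (play G₀ G h).tr s α s')
    (hg : Good0 G₀ G₁ G h s) : Good0 G₀ G₁ G h s' := by
  have hA : G₀.A = G₁.A := by unfold TIOTS.A; rw [haff.1, haff.2.1]
  rcases htr with ⟨p₀, q, w, hs, hf, s₀, sG, hst0, hstG, rfl⟩ | ⟨rfl, -, rfl⟩ | ⟨rfl, -, rfl⟩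
  · subst hs
    rcases hg with hbot | ⟨p₁, ⟨u, hu₀, hu₁⟩, l, hl⟩ | ⟨l, hl⟩
    · rcases s₀ with t | _ | _ <;> rcases sG with g | _ | _ <;>
        first | trivial | exact Or.inl hbot | exact hbot
    · have hmv01 : mvSet G₀ p₀ = mvSet G₁ p₁ :=
        haff.2.2 (wordOf u) p₀ p₁ hu₀.toExec hu₁.toExec
      have hmvS : mvSet (stratPlus G₀ G₁) (pairSt p₀ p₁) = mvSet G₀ p₀ :=
        mvSet_pair hA hG₀.1 hmv01
      have hfS : fired (stratPlus G₀ G₁) G h (pairSt p₀ p₁) q w α :=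
        (fired_congr (GP := stratPlus G₀ G₁) (GP' := G₀) rfl rfl hmvS h q w α).mpr hf
      rcases hst0 with ⟨hv, ht₀⟩ | ⟨hnv, rfl⟩
      · obtain ⟨t₁, ht₁⟩ := enabled_of_fired hG₁ haff.1 hGO hmv01 hf hv
        have hSstep := (S_tr_pair_iff hA hG₀.1).mpr ⟨s₀, t₁, ht₀, ht₁, rfl⟩
        have hvS : TAct.valid (stratPlus G₀ G₁).A α := hv
        have hPS : (play (stratPlus G₀ G₁) G h).tr (.plain (pairSt p₀ p₁, q, w)) α
            (stPlay (tcat w [α]) (stOr s₀ t₁) sG) :=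
          Or.inl ⟨pairSt p₀ p₁, q, w, rfl, hfS, stOr s₀ t₁, sG, Or.inl ⟨hvS, hSstep⟩, hstG, rfl⟩
        have hl' := hl.snoc hPS
        rcases s₀ with t0 | _ | _ <;> rcases t₁ with t1 | _ | _ <;> rcases sG with g | _ | _ <;>
          first
            | trivial
            | exact ⟨l ++ [α], hl'⟩
            | exact Or.inl ⟨l ++ [α], hl'⟩
            | exact Or.inr (Or.inl ⟨t1, ⟨u ++ [α], hu₀.snoc ht₀, hu₁.snoc ht₁⟩, ⟨l ++ [α], hl'⟩⟩)
            | exact Or.inr (Or.inr ⟨l ++ [α], hl'⟩)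
      · have hnvS : ¬ TAct.valid (stratPlus G₀ G₁).A α := hnv
        have hPS : (play (stratPlus G₀ G₁) G h).tr (.plain (pairSt p₀ p₁, q, w)) α
            (stPlay (tcat w [α]) (.plain (pairSt p₀ p₁)) sG) :=
          Or.inl ⟨pairSt p₀ p₁, q, w, rfl, hfS, .plain (pairSt p₀ p₁), sG,
            Or.inr ⟨hnvS, rfl⟩, hstG, rfl⟩
        have hl' := hl.snoc hPS
        rcases sG with g | _ | _ <;>
          first
            | trivial
            | exact ⟨l ++ [α], hl'⟩
            | exact Or.inl ⟨l ++ [α], hl'⟩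
            | exact Or.inr (Or.inl ⟨p₁, ⟨u, hu₀, hu₁⟩, ⟨l ++ [α], hl'⟩⟩)
    · have hfS : fired (stratPlus G₀ G₁) G h (Sum.inl p₀) q w α :=
        (fired_congr (GP := stratPlus G₀ G₁) (GP' := G₀) rfl rfl mvSet_loneL h q w α).mpr hf
      rcases hst0 with ⟨hv, ht₀⟩ | ⟨hnv, rfl⟩
      · have hSstep : (stratPlus G₀ G₁).tr (.plain (Sum.inl p₀)) α (embL s₀) :=
          S_tr_loneL_iff.mpr ⟨s₀, ht₀, rfl⟩
        have hvS : TAct.valid (stratPlus G₀ G₁).A α := hv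
        have hPS : (play (stratPlus G₀ G₁) G h).tr (.plain (Sum.inl p₀, q, w)) α
            (stPlay (tcat w [α]) (embL s₀) sG) :=
          Or.inl ⟨Sum.inl p₀, q, w, rfl, hfS, embL s₀, sG, Or.inl ⟨hvS, hSstep⟩, hstG, rfl⟩
        have hl' := hl.snoc hPS
        rcases s₀ with t0 | _ | _ <;> rcases sG with g | _ | _ <;>
          first
            | trivial
            | exact ⟨l ++ [α], hl'⟩
            | exact Or.inl ⟨l ++ [α], hl'⟩
            | exact Or.inr (Or.inr ⟨l ++ [α], hl'⟩)
      · have hnvS : ¬ TAct.valid (stratPlus G₀ G₁).A α := hnv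
        have hPS : (play (stratPlus G₀ G₁) G h).tr (.plain (Sum.inl p₀, q, w)) α
            (stPlay (tcat w [α]) (.plain (Sum.inl p₀)) sG) :=
          Or.inl ⟨Sum.inl p₀, q, w, rfl, hfS, .plain (Sum.inl p₀), sG,
            Or.inr ⟨hnvS, rfl⟩, hstG, rfl⟩
        have hl' := hl.snoc hPS
        rcases sG with g | _ | _ <;>
          first
            | trivial
            | exact ⟨l ++ [α], hl'⟩
            | exact Or.inl ⟨l ++ [α], hl'⟩
            | exact Or.inr (Or.inr ⟨l ++ [α], hl'⟩)
  · exact hg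
  · trivial

lemma Good0_init : Good0 G₀ G₁ G h ((play G₀ G h).init) := by
  show Good0 G₀ G₁ G h (stPlay [] G₀.init G.init)
  have e : (play (stratPlus G₀ G₁) G h).init
      = stPlay ([] : TWord Act) (stOr G₀.init G₁.init) G.init := rfl
  rcases h0 : G₀.init with p₀ | _ | _ <;> rcases h1 : G₁.init with p₁ | _ | _ <;>
      rcases h2 : G.init with qg | _ | _ <;>
    first
      | trivial
      | exact Or.inr (Or.inl ⟨p₁, ⟨[], steps_nil' h0, steps_nil' h1⟩,
          ⟨[], steps_nil' (by rw [e, h0, h1, h2]; rfl)⟩⟩)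
      | exact Or.inr (Or.inr ⟨[], steps_nil' (by rw [e, h0, h1, h2]; rfl)⟩)
      | exact Or.inl ⟨[], steps_nil' (by rw [e, h0, h1, h2]; rfl)⟩
      | exact ⟨[], steps_nil' (by rw [e, h0, h1, h2]; rfl)⟩


lemma Good1_step (hG₀ : IsStrategy G₀) (hG₁ : IsStrategy G₁) (haff : Affine G₀ G₁)
    (hGO : G.O = G₀.I) {s α s'} (htr : (play G₁ G h).tr s α s')
    (hg : Good1 G₀ G₁ G h s) : Good1 G₀ G₁ G h s' := by
  have hA : G₀.A = G₁.A := by unfold TIOTS.A; rw [haff.1, haff.2.1]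
  rcases htr with ⟨p₁, q, w, hs, hf, s₁, sG, hst1, hstG, rfl⟩ | ⟨rfl, -, rfl⟩ | ⟨rfl, -, rfl⟩
  · subst hs
    rcases hg with hbot | ⟨p₀, ⟨u, hu₀, hu₁⟩, l, hl⟩ | ⟨l, hl⟩
    · rcases s₁ with t | _ | _ <;> rcases sG with g | _ | _ <;>
        first | trivial | exact Or.inl hbot | exact hbot
    · have hmv01 : mvSet G₀ p₀ = mvSet G₁ p₁ :=
        haff.2.2 (wordOf u) p₀ p₁ hu₀.toExec hu₁.toExec
      have hmvS : mvSet (stratPlus G₀ G₁) (pairSt p₀ p₁) = mvSet G₀ p₀ :=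
        mvSet_pair hA hG₀.1 hmv01
      have hfS : fired (stratPlus G₀ G₁) G h (pairSt p₀ p₁) q w α :=
        (fired_congr (GP := stratPlus G₀ G₁) (GP' := G₁) haff.1 haff.2.1
          (hmvS.trans hmv01) h q w α).mpr hf
      rcases hst1 with ⟨hv, ht₁⟩ | ⟨hnv, rfl⟩
      · have hGOA : G.O = G₁.I := by rw [hGO, haff.1]
        obtain ⟨t₀, ht₀⟩ := enabled_of_fired hG₀ haff.1.symm hGOA hmv01.symm hf hv
        have hSstep := (S_tr_pair_iff hA hG₀.1).mpr ⟨t₀, s₁, ht₀, ht₁, rfl⟩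
        have hv0 : TAct.valid G₀.A α := by rw [hA]; exact hv
        have hvS : TAct.valid (stratPlus G₀ G₁).A α := hv0
        have hPS : (play (stratPlus G₀ G₁) G h).tr (.plain (pairSt p₀ p₁, q, w)) α
            (stPlay (tcat w [α]) (stOr t₀ s₁) sG) :=
          Or.inl ⟨pairSt p₀ p₁, q, w, rfl, hfS, stOr t₀ s₁, sG, Or.inl ⟨hvS, hSstep⟩, hstG, rfl⟩
        have hl' := hl.snoc hPS
        rcases t₀ with t0 | _ | _ <;> rcases s₁ with t1 | _ | _ <;> rcases sG with g | _ | _ <;>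
          first
            | trivial
            | exact ⟨l ++ [α], hl'⟩
            | exact Or.inl ⟨l ++ [α], hl'⟩
            | exact Or.inr (Or.inl ⟨t0, ⟨u ++ [α], hu₀.snoc ht₀, hu₁.snoc ht₁⟩, ⟨l ++ [α], hl'⟩⟩)
            | exact Or.inr (Or.inr ⟨l ++ [α], hl'⟩)
      · have hnv0 : ¬ TAct.valid G₀.A α := fun x => hnv (by rw [← hA]; exact x)
        have hnvS : ¬ TAct.valid (stratPlus G₀ G₁).A α := hnv0
        have hPS : (play (stratPlus G₀ G₁) G h).tr (.plain (pairSt p₀ p₁, q, w)) α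
            (stPlay (tcat w [α]) (.plain (pairSt p₀ p₁)) sG) :=
          Or.inl ⟨pairSt p₀ p₁, q, w, rfl, hfS, .plain (pairSt p₀ p₁), sG,
            Or.inr ⟨hnvS, rfl⟩, hstG, rfl⟩
        have hl' := hl.snoc hPS
        rcases sG with g | _ | _ <;>
          first
            | trivial
            | exact ⟨l ++ [α], hl'⟩
            | exact Or.inl ⟨l ++ [α], hl'⟩
            | exact Or.inr (Or.inl ⟨p₀, ⟨u, hu₀, hu₁⟩, ⟨l ++ [α], hl'⟩⟩)
    · have hfS : fired (stratPlus G₀ G₁) G h (Sum.inr (Sum.inl p₁)) q w α :=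
        (fired_congr (GP := stratPlus G₀ G₁) (GP' := G₁) haff.1 haff.2.1
          (mvSet_loneR haff.2.1) h q w α).mpr hf
      rcases hst1 with ⟨hv, ht₁⟩ | ⟨hnv, rfl⟩
      · have hSstep : (stratPlus G₀ G₁).tr (.plain (Sum.inr (Sum.inl p₁))) α (embR s₁) :=
          S_tr_loneR_iff.mpr ⟨s₁, ht₁, rfl⟩
        have hv0 : TAct.valid G₀.A α := by rw [hA]; exact hv
        have hvS : TAct.valid (stratPlus G₀ G₁).A α := hv0
        have hPS : (play (stratPlus G₀ G₁) G h).tr (.plain (Sum.inr (Sum.inl p₁), q, w)) α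
            (stPlay (tcat w [α]) (embR s₁) sG) :=
          Or.inl ⟨Sum.inr (Sum.inl p₁), q, w, rfl, hfS, embR s₁, sG, Or.inl ⟨hvS, hSstep⟩,
            hstG, rfl⟩
        have hl' := hl.snoc hPS
        rcases s₁ with t1 | _ | _ <;> rcases sG with g | _ | _ <;>
          first
            | trivial
            | exact ⟨l ++ [α], hl'⟩
            | exact Or.inl ⟨l ++ [α], hl'⟩
            | exact Or.inr (Or.inr ⟨l ++ [α], hl'⟩)
      · have hnv0 : ¬ TAct.valid G₀.A α := fun x => hnv (by rw [← hA]; exact x)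
        have hnvS : ¬ TAct.valid (stratPlus G₀ G₁).A α := hnv0
        have hPS : (play (stratPlus G₀ G₁) G h).tr (.plain (Sum.inr (Sum.inl p₁), q, w)) α
            (stPlay (tcat w [α]) (.plain (Sum.inr (Sum.inl p₁))) sG) :=
          Or.inl ⟨Sum.inr (Sum.inl p₁), q, w, rfl, hfS, .plain (Sum.inr (Sum.inl p₁)), sG,
            Or.inr ⟨hnvS, rfl⟩, hstG, rfl⟩
        have hl' := hl.snoc hPS
        rcases sG with g | _ | _ <;>
          first
            | trivial
            | exact ⟨l ++ [α], hl'⟩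
            | exact Or.inl ⟨l ++ [α], hl'⟩
            | exact Or.inr (Or.inr ⟨l ++ [α], hl'⟩)
  · exact hg
  · trivial

lemma Good1_init : Good1 G₀ G₁ G h ((play G₁ G h).init) := by
  show Good1 G₀ G₁ G h (stPlay [] G₁.init G.init)
  have e : (play (stratPlus G₀ G₁) G h).init
      = stPlay ([] : TWord Act) (stOr G₀.init G₁.init) G.init := rfl
  rcases h0 : G₀.init with p₀ | _ | _ <;> rcases h1 : G₁.init with p₁ | _ | _ <;>
      rcases h2 : G.init with qg | _ | _ <;>
    first
      | trivial
      | exact Or.inr (Or.inl ⟨p₀, ⟨[], steps_nil' h0, steps_nil' h1⟩,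
          ⟨[], steps_nil' (by rw [e, h0, h1, h2]; rfl)⟩⟩)
      | exact Or.inr (Or.inr ⟨[], steps_nil' (by rw [e, h0, h1, h2]; rfl)⟩)
      | exact Or.inl ⟨[], steps_nil' (by rw [e, h0, h1, h2]; rfl)⟩
      | exact ⟨[], steps_nil' (by rw [e, h0, h1, h2]; rfl)⟩

end Aux

/-- For affine component strategies `G₀`, `G₁` over `(I, O)`, every
environment strategy `G` (over the complementary alphabet) and every coin strategy
`h`: the plays `G₀ ∥_h G` and `G₁ ∥_h G` are both `⊥`-free iff `(G₀ + G₁) ∥_h G` is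
`⊥`-free. -/
theorem disjunction_play_bot_free {Act : Type} (G₀ G₁ G : TIOTS Act) (h : Coin Act)
    (hG₀ : IsStrategy G₀) (hG₁ : IsStrategy G₁) (haff : Affine G₀ G₁)
    (hG : IsStrategy G) (hGI : G.I = G₀.O) (hGO : G.O = G₀.I) :
    (BotFree (play G₀ G h) ∧ BotFree (play G₁ G h)) ↔ BotFree (play (stratPlus G₀ G₁) G h) := by
  constructor
  · rintro ⟨hb₀, hb₁⟩ w hr
    have hg : GoodC G₀ G₁ G h St.bot :=
      exec_pres (fun _ _ _ ht => GoodC_step hG₀ hG₁ haff ht) hr GoodC_init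
    obtain ⟨l, hc⟩ := hg
    rcases hc with hc | hc
    · exact hb₀ _ hc.toExec
    · exact hb₁ _ hc.toExec
  · intro hbS
    refine ⟨fun w hr => ?_, fun w hr => ?_⟩
    · have hg : Good0 G₀ G₁ G h St.bot :=
        exec_pres (fun _ _ _ ht => Good0_step hG₀ hG₁ haff hGO ht) hr Good0_init
      obtain ⟨l, hl⟩ := hg
      exact hbS _ hl.toExec
    · have hg : Good1 G₀ G₁ G h St.bot :=
        exec_pres (fun _ _ _ ht => Good1_step hG₀ hG₁ haff hGO ht) hr Good1_init
      obtain ⟨l, hl⟩ := hg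
      exact hbS _ hl.toExec

end TSpec
end
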